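/- arXiv:2202.01342 — 3 statements merged into one kernel-verified Lean document; each statement's English description precedes it below -/
import Mathlib

section
/- Let Y be a nonempty compact metric space, X a metric space, and φ : Y → X a map satisfying d_X(φ(a), φ(b)) ≥ d_Y(a,b) for all a, b ∈ Y. Fix p ∈ Y and x ∈ X, and suppose q ∈ Y is a point of maximum for p at x, i.e., f_p(x) = d_Y(p,q) − d_X(x, φ(q)), where f_p(x) = ⨆_{q' ∈ Y} (d_Y(p,q') − d_X(x, φ(q'))). Then f_p(φ(q)) = f_p(x) + d_X(x, φ(q)). -/
lemma bdd_aux {Y X : Type*} [MetricSpace Y] [CompactSpace Y]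
    [MetricSpace X] (φ : Y → X) (p : Y) (z : X) :
    BddAbove (Set.range fun q' : Y => dist p q' - dist z (φ q')) := by
  refine ⟨Metric.diam (Set.univ : Set Y), ?_⟩
  rintro _ ⟨q', rfl⟩
  have h1 : dist p q' ≤ Metric.diam (Set.univ : Set Y) :=
    Metric.dist_le_diam_of_mem isCompact_univ.isBounded trivial trivial
  show dist p q' - dist z (φ q') ≤ _
  have h2 : 0 ≤ dist z (φ q') := dist_nonneg
  linarith

/-- If `φ : Y → X` does not decrease distances from the nonempty compact metric
space `Y`, `p ∈ Y`, `x ∈ X`, and `q ∈ Y` is a point of maximum for `p` at `x`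
(i.e. it realizes the supremum defining `f_p x`), then
`f_p (φ q) = f_p x + d_X x (φ q)`. -/
theorem stmt_4 {Y X : Type*} [MetricSpace Y] [CompactSpace Y] [Nonempty Y]
    [MetricSpace X] (φ : Y → X)
    (hφ : ∀ a b : Y, dist (φ a) (φ b) ≥ dist a b)
    (p : Y) (x : X) (q : Y)
    (hq : (⨆ q' : Y, (dist p q' - dist x (φ q'))) = dist p q - dist x (φ q)) :
    (⨆ q' : Y, (dist p q' - dist (φ q) (φ q')))
      = (⨆ q' : Y, (dist p q' - dist x (φ q'))) + dist x (φ q) := by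
  have hb1 := bdd_aux φ p (φ q)
  have hb2 := bdd_aux φ p x
  apply le_antisymm
  · refine ciSup_le fun q' => ?_
    have ht : dist x (φ q') ≤ dist x (φ q) + dist (φ q) (φ q') := dist_triangle _ _ _
    have hs : dist p q' - dist x (φ q') ≤ ⨆ q' : Y, (dist p q' - dist x (φ q')) :=
      le_ciSup hb2 q'
    linarith
  · have := le_ciSup hb1 q
    simp only [dist_self, sub_zero] at this
    rw [hq]
    linarith [dist_nonneg (x := x) (y := φ q)]
end

section
/- Let Y be a nonempty compact metric space, X a metric space, φ : Y → X a map, and for p ∈ Y define f_p(x) = ⨆_{q ∈ Y} (d_Y(p,q) − d_X(x, φ(q))). Fix x ∈ X and p₁, p₂ ∈ Y, and suppose q₁, q₂ ∈ Y satisfy f_{p₁}(x) = d_Y(p₁,q₁) − d_X(x, φ(q₁)) and f_{p₂}(x) = d_Y(p₂,q₂) − d_X(x, φ(q₂)). If d_Y(p₁,q₂) + d_Y(p₂,q₁) ≥ d_Y(p₁,q₁) + d_Y(p₂,q₂), then f_{p₁}(x) = d_Y(p₁,q₂) − d_X(x, φ(q₂)) and f_{p₂}(x) = d_Y(p₂,q₁)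 − d_X(x, φ(q₁)); that is, q₂ is also a point of maximum for p₁ and q₁ is also a point of maximum for p₂. -/
/-- Equality analysis in the non-separation lemma: if `q₁, q₂` are points of
maximum for `p₁, p₂` respectively at `x`, and the crossing inequality
`d_Y p₁ q₂ + d_Y p₂ q₁ ≥ d_Y p₁ q₁ + d_Y p₂ q₂` holds, then `q₂` is also a point
of maximum for `p₁` and `q₁` is also a point of maximum for `p₂`. -/
theorem stmt_6 {Y X : Type*} [MetricSpace Y] [CompactSpace Y] [Nonempty Y]
    [MetricSpace X] (φ : Y → X) (x : X) (p₁ p₂ q₁ q₂ : Y)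
    (h₁ : (⨆ q : Y, (dist p₁ q - dist x (φ q))) = dist p₁ q₁ - dist x (φ q₁))
    (h₂ : (⨆ q : Y, (dist p₂ q - dist x (φ q))) = dist p₂ q₂ - dist x (φ q₂))
    (hcross : dist p₁ q₂ + dist p₂ q₁ ≥ dist p₁ q₁ + dist p₂ q₂) :
    (⨆ q : Y, (dist p₁ q - dist x (φ q))) = dist p₁ q₂ - dist x (φ q₂) ∧
    (⨆ q : Y, (dist p₂ q - dist x (φ q))) = dist p₂ q₁ - dist x (φ q₁) := by
  have hb : ∀ p : Y, BddAbove (Set.range fun q : Y => dist p q - dist x (φ q)) := by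
    intro p
    refine ⟨Metric.diam (Set.univ : Set Y), ?_⟩
    rintro _ ⟨q, rfl⟩
    show dist p q - dist x (φ q) ≤ _
    have h1 : dist p q ≤ Metric.diam (Set.univ : Set Y) :=
      Metric.dist_le_diam_of_mem isCompact_univ.isBounded (Set.mem_univ _) (Set.mem_univ _)
    have h2 : 0 ≤ dist x (φ q) := dist_nonneg
    linarith
  have hle1 : dist p₁ q₂ - dist x (φ q₂) ≤ ⨆ q : Y, (dist p₁ q - dist x (φ q)) :=
    le_ciSup (hb p₁) q₂
  have hle2 : dist p₂ q₁ - dist x (φ q₁) ≤ ⨆ q : Y, (dist p₂ q - dist x (φ q)) :=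
    le_ciSup (hb p₂) q₁
  rw [h₁] at hle1 ⊢
  rw [h₂] at hle2 ⊢
  constructor <;> linarith
end

section
/- Let n ≥ 1 and m ≥ 1, let θ : {0, …, n−1} → ℝ be a list of angles, and suppose {0, …, n−1} is partitioned into m consecutive blocks 0 = a₁ ≤ a₂ ≤ ⋯ ≤ a_{m+1} = n such that on each block {a_k, …, a_{k+1}−1} the sequence θ is monotone (nondecreasing or nonincreasing) and has oscillation max θ − min θ over the block at most L_k, where L_k ≥ 0 and Σ_{k=1}^{m} L_k = 2π. Then the cyclic sum of oriented triangle areas Σ_{i=0}^{n−1} (1/2) sin(θ((i+1) mod n) − θ(i)) is at most π + m/2. In particular, with m = 4G blocks this bound equals π(1 + 2G/π). -/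
/-!
Within a monotone block the steps `θ (i+1) - θ i` all have one sign, and `sin x ≤ |x|`, so
the block's sum of sines telescopes to at most its oscillation, hence to at most `L k`. Only the
last step of each block, which jumps to the next block (or wraps around to `θ 0`), escapes this;
it contributes at most `sin ≤ 1`. Summing over the `m` blocks gives `(∑ L k) / 2 + m / 2 = π + m / 2`.
-/

open Finset Real

theorem Nat.le_of_forall_le_succ_of_mem_Ico {α : Type*} [Preorder α] {a : ℕ → α} {p q : ℕ}
    (ha : ∀ k ∈ Ico p q, a k ≤ a (k + 1)) (hpq : p ≤ q) : a p ≤ a q := by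
  induction q, hpq using Nat.le_induction with
  | base => exact le_rfl
  | succ q hpq ih =>
    exact (ih fun k hk ↦ ha k (by simp only [mem_Ico] at hk ⊢; omega)).trans
      (ha q (by simp only [mem_Ico]; omega))

theorem Finset.sum_Ico_eq_sum_sum_Ico {M : Type*} [AddCommMonoid M] (f : ℕ → M) {a : ℕ → ℕ}
    {p q : ℕ} (ha : ∀ k ∈ Ico p q, a k ≤ a (k + 1)) (hpq : p ≤ q) :
    ∑ i ∈ Ico (a p) (a q), f i = ∑ k ∈ Ico p q, ∑ i ∈ Ico (a k) (a (k + 1)), f i := by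
  induction q, hpq using Nat.le_induction with
  | base => simp
  | succ q hpq ih =>
    have ha' : ∀ k ∈ Ico p q, a k ≤ a (k + 1) := fun k hk ↦
      ha k (by simp only [mem_Ico] at hk ⊢; omega)
    rw [← sum_Ico_consecutive f (Nat.le_of_forall_le_succ_of_mem_Ico ha' hpq)
      (ha q (by simp only [mem_Ico]; omega)), ih ha', sum_Ico_succ_top hpq]

theorem sum_Ico_sin_sub_le_abs {θ : ℕ → ℝ} {s t : ℕ} (hst : s ≤ t)
    (hθ : MonotoneOn θ (Set.Icc s t) ∨ AntitoneOn θ (Set.Icc s t)) :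
    ∑ i ∈ Ico s t, sin (θ (i + 1) - θ i) ≤ |θ t - θ s| := by
  have hsin : ∀ x : ℝ, sin x ≤ |x| := fun x ↦ (le_abs_self _).trans abs_sin_le_abs
  have hmem : ∀ i ∈ Ico s t, i ∈ Set.Icc s t ∧ i + 1 ∈ Set.Icc s t := fun i hi ↦ by
    simp only [mem_Ico] at hi; exact ⟨⟨hi.1, hi.2.le⟩, ⟨by omega, hi.2⟩⟩
  rcases hθ with hθ | hθ
  · calc ∑ i ∈ Ico s t, sin (θ (i + 1) - θ i)
        ≤ ∑ i ∈ Ico s t, (θ (i + 1) - θ i) := sum_le_sum fun i hi ↦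
          sin_le (sub_nonneg.2 (hθ (hmem i hi).1 (hmem i hi).2 i.le_succ))
      _ = θ t - θ s := sum_Ico_sub θ hst
      _ ≤ |θ t - θ s| := le_abs_self _
  · calc ∑ i ∈ Ico s t, sin (θ (i + 1) - θ i)
        ≤ ∑ i ∈ Ico s t, -(θ (i + 1) - θ i) := sum_le_sum fun i hi ↦ (hsin _).trans_eq
          (abs_of_nonpos (sub_nonpos.2 (hθ (hmem i hi).1 (hmem i hi).2 i.le_succ)))
      _ = -(θ t - θ s) := by rw [sum_neg_distrib, sum_Ico_sub θ hst]
      _ ≤ |θ t - θ s| := neg_le_abs _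

theorem sum_Ico_half_sin_sub_mod_le {n s t : ℕ} {θ : ℕ → ℝ} {L : ℝ} (hst : s ≤ t) (htn : t ≤ n)
    (hL : 0 ≤ L) (hθ : MonotoneOn θ (Set.Ico s t) ∨ AntitoneOn θ (Set.Ico s t))
    (hosc : ∀ i ∈ Set.Ico s t, ∀ j ∈ Set.Ico s t, θ i - θ j ≤ L) :
    ∑ i ∈ Ico s t, (1 / 2 : ℝ) * sin (θ ((i + 1) % n) - θ i) ≤ L / 2 + 1 / 2 := by
  rcases hst.eq_or_lt with rfl | hst
  · simp only [Ico_self, sum_empty]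
    linarith
  obtain ⟨u, rfl⟩ : ∃ u, t = u + 1 := ⟨t - 1, by omega⟩
  have hsu : s ≤ u := Nat.le_of_lt_succ hst
  have hIcc : Set.Icc s u ⊆ Set.Ico s (u + 1) := fun i hi ↦ ⟨hi.1, Nat.lt_succ_of_le hi.2⟩
  -- Inside the block no index wraps around, so the steps telescope.
  have hinner : ∑ i ∈ Ico s u, sin (θ ((i + 1) % n) - θ i) ≤ L := by
    rw [sum_congr rfl fun i hi ↦ by rw [Nat.mod_eq_of_lt (by simp only [mem_Ico] at hi; omega)]]
    refine (sum_Ico_sin_sub_le_abs hsu (hθ.imp (·.mono hIcc) (·.mono hIcc))).trans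
      (abs_sub_le_iff.2 ⟨hosc _ (hIcc ⟨hsu, le_rfl⟩) _ (hIcc ⟨le_rfl, hsu⟩), ?_⟩)
    exact hosc _ (hIcc ⟨le_rfl, hsu⟩) _ (hIcc ⟨hsu, le_rfl⟩)
  have hlast := sin_le_one (θ ((u + 1) % n) - θ u)
  rw [← mul_sum, sum_Ico_succ_top hsu]
  linarith

theorem stmt_9_general (n m : ℕ) (θ : ℕ → ℝ)
    (a : ℕ → ℕ) (ha1 : a 1 = 0) (ha2 : a (m + 1) = n)
    (hamono : ∀ k, 1 ≤ k → k ≤ m → a k ≤ a (k + 1))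
    (L : ℕ → ℝ) (hL0 : ∀ k, 1 ≤ k → k ≤ m → 0 ≤ L k)
    (hLsum : ∑ k ∈ Finset.Icc 1 m, L k = 2 * Real.pi)
    (hblockmono : ∀ k, 1 ≤ k → k ≤ m →
      (∀ i j, a k ≤ i → i ≤ j → j < a (k + 1) → θ i ≤ θ j) ∨
      (∀ i j, a k ≤ i → i ≤ j → j < a (k + 1) → θ j ≤ θ i))
    (hblockosc : ∀ k, 1 ≤ k → k ≤ m →
      ∀ i j, a k ≤ i → i < a (k + 1) → a k ≤ j → j < a (k + 1) →
        θ i - θ j ≤ L k) :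
    ∑ i ∈ Finset.range n, (1 / 2 : ℝ) * Real.sin (θ ((i + 1) % n) - θ i)
      ≤ Real.pi + m / 2 := by
  have hchain : ∀ k ∈ Ico 1 (m + 1), a k ≤ a (k + 1) := fun k hk ↦
    hamono k (mem_Ico.1 hk).1 (Nat.le_of_lt_succ (mem_Ico.1 hk).2)
  have hblock : ∀ k ∈ Ico 1 (m + 1),
      ∑ i ∈ Ico (a k) (a (k + 1)), (1 / 2 : ℝ) * sin (θ ((i + 1) % n) - θ i) ≤ L k / 2 + 1 / 2 := by
    intro k hk
    obtain ⟨hk1, hkm⟩ : 1 ≤ k ∧ k ≤ m := by simp only [mem_Ico] at hk; omega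
    have htn : a (k + 1) ≤ n := ha2 ▸ Nat.le_of_forall_le_succ_of_mem_Ico
      (fun j hj ↦ hchain j (by simp only [mem_Ico] at hj ⊢; omega)) (by omega)
    exact sum_Ico_half_sin_sub_mod_le (hamono k hk1 hkm) htn (hL0 k hk1 hkm)
      ((hblockmono k hk1 hkm).imp (fun h i hi j hj hij ↦ h i j hi.1 hij hj.2)
        (fun h i hi j hj hij ↦ h i j hi.1 hij hj.2))
      (fun i hi j hj ↦ hblockosc k hk1 hkm i j hi.1 hi.2 hj.1 hj.2)
  calc ∑ i ∈ range n, (1 / 2 : ℝ) * sin (θ ((i + 1) % n) - θ i)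
      = ∑ k ∈ Ico 1 (m + 1), ∑ i ∈ Ico (a k) (a (k + 1)),
          (1 / 2 : ℝ) * sin (θ ((i + 1) % n) - θ i) := by
        rw [← sum_Ico_eq_sum_sum_Ico _ hchain (by omega), ha1, ha2, range_eq_Ico]
    _ ≤ ∑ k ∈ Ico 1 (m + 1), (L k / 2 + 1 / 2) := sum_le_sum hblock
    _ = π + m / 2 := by
        rw [sum_add_distrib, ← sum_div, Ico_add_one_right_eq_Icc, hLsum]
        rw [sum_const, Nat.card_Icc, Nat.add_sub_cancel, nsmul_eq_mul]
        ring

/-- Combinatorial bound: if the indices `0, …, n-1` are partitioned into `m`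
consecutive blocks `a 1 = 0 ≤ a 2 ≤ ⋯ ≤ a (m+1) = n`, on each block the angles
`θ` are monotone (nondecreasing or nonincreasing) with oscillation at most
`L k ≥ 0`, and `∑ L k = 2π`, then the cyclic sum of oriented triangle areas
`∑_{i=0}^{n-1} (1/2) sin (θ ((i+1) mod n) - θ i)` is at most `π + m / 2`. -/
theorem stmt_9 (n m : ℕ) (hn : 1 ≤ n) (hm : 1 ≤ m) (θ : ℕ → ℝ)
    (a : ℕ → ℕ) (ha1 : a 1 = 0) (ha2 : a (m + 1) = n)
    (hamono : ∀ k, 1 ≤ k → k ≤ m → a k ≤ a (k + 1))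
    (L : ℕ → ℝ) (hL0 : ∀ k, 1 ≤ k → k ≤ m → 0 ≤ L k)
    (hLsum : ∑ k ∈ Finset.Icc 1 m, L k = 2 * Real.pi)
    (hblockmono : ∀ k, 1 ≤ k → k ≤ m →
      (∀ i j, a k ≤ i → i ≤ j → j < a (k + 1) → θ i ≤ θ j) ∨
      (∀ i j, a k ≤ i → i ≤ j → j < a (k + 1) → θ j ≤ θ i))
    (hblockosc : ∀ k, 1 ≤ k → k ≤ m →
      ∀ i j, a k ≤ i → i < a (k + 1) → a k ≤ j → j < a (k + 1) →
        θ i - θ j ≤ L k) :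
    ∑ i ∈ Finset.range n, (1 / 2 : ℝ) * Real.sin (θ ((i + 1) % n) - θ i)
      ≤ Real.pi + m / 2 :=
  stmt_9_general n m θ a ha1 ha2 hamono L hL0 hLsum hblockmono hblockosc
end
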